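/- arXiv:1903.00169 — 5 statements merged into one kernel-verified Lean document; each statement's English description precedes it below -/
import Mathlib

section
/- Let p be an odd prime and q = p^m. An element β of the finite field F_q with q elements is a nonzero square if and only if the field norm N(β) from F_q to F_p is a nonzero quadratic residue modulo p. -/
/-!
For an extension `L/K` of finite fields with `#K = q` and `[L : K] = n`, the norm is
`N x = x ^ ((q ^ n - 1) / (q - 1))`. In odd characteristic Euler's criterion in `K`, `N x` is a
square iff `(N x) ^ ((q - 1) / 2) = 1`, therefore reads `x ^ ((q ^ n - 1) / 2) = 1`, which is
Euler's criterion in `L`. In characteristic 2 every element of a finite field is a square.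
-/

theorem Nat.pow_sub_one_div_sub_one_mul_half {q : ℕ} (hq : Odd q) (n : ℕ) :
    (q ^ n - 1) / (q - 1) * (q / 2) = q ^ n / 2 := by
  obtain ⟨k, rfl⟩ := hq
  obtain ⟨d, hd⟩ := Nat.sub_one_dvd_pow_sub_one (2 * k + 1) n
  have hpos : 1 ≤ (2 * k + 1) ^ n := Nat.one_le_pow _ _ (by omega)
  rcases Nat.eq_zero_or_pos k with rfl | hk
  · simp
  rw [Nat.add_sub_cancel] at hd ⊢
  rw [hd, Nat.mul_div_cancel_left _ (by omega), show (2 * k + 1) / 2 = k by omega]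
  rw [Nat.mul_assoc] at hd
  rw [Nat.mul_comm d k]
  omega

namespace FiniteField

variable {K L : Type*} [Field K] [Field L] [Algebra K L] [Finite L]

theorem isSquare_norm_iff_of_ringChar_ne_two (hK : ringChar K ≠ 2) {x : L} (hx : x ≠ 0) :
    IsSquare (Algebra.norm K x) ↔ IsSquare x := by
  have := Finite.of_injective _ (algebraMap K L).injective
  have := Fintype.ofFinite K
  have := Fintype.ofFinite L
  have hL : ringChar L ≠ 2 := Algebra.ringChar_eq K L ▸ hK
  have hKodd : Odd (Nat.card K) := by
    rw [← Fintype.card_eq_nat_card, Nat.odd_iff]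
    exact odd_card_of_char_ne_two hK
  rw [isSquare_iff hK (Algebra.norm_ne_zero_iff.mpr hx), isSquare_iff hL hx,
    ← (algebraMap K L).injective.eq_iff, map_pow, map_one, algebraMap_norm_eq_pow, ← pow_mul,
    Fintype.card_eq_nat_card, Fintype.card_eq_nat_card, Module.natCard_eq_pow_finrank (K := K),
    Nat.pow_sub_one_div_sub_one_mul_half hKodd]

theorem isSquare_norm_iff (x : L) : IsSquare (Algebra.norm K x) ↔ IsSquare x := by
  by_cases hK : ringChar K = 2
  · have hL : ringChar L = 2 := Algebra.ringChar_eq K L ▸ hK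
    have := Finite.of_injective _ (algebraMap K L).injective
    exact iff_of_true (isSquare_of_char_two hK _) (isSquare_of_char_two hL _)
  rcases eq_or_ne x 0 with rfl | hx
  · simp
  exact isSquare_norm_iff_of_ringChar_ne_two hK hx

end FiniteField

theorem stmt_0_general (p m : ℕ) [Fact (Nat.Prime p)]
    (β : GaloisField p m) :
    (β ≠ 0 ∧ IsSquare β) ↔
      (Algebra.norm (ZMod p) β ≠ 0 ∧ IsSquare (Algebra.norm (ZMod p) β)) := by
  rw [Algebra.norm_ne_zero_iff, FiniteField.isSquare_norm_iff]

theorem stmt_0 (p m : ℕ) [Fact (Nat.Prime p)] (hodd : p ≠ 2) (hm : m ≠ 0)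
    (β : GaloisField p m) :
    (β ≠ 0 ∧ IsSquare β) ↔
      (Algebra.norm (ZMod p) β ≠ 0 ∧ IsSquare (Algebra.norm (ZMod p) β)) :=
  stmt_0_general p m β
end

section
/- Let p be an odd prime, q = p^m, and set d = (q−1)/4 if q ≡ 1 (mod 4) and d = (q+1)/4 if q ≡ 3 (mod 4). Then every nonzero square in F_q can be written as an ordered sum of two nonzero squares in exactly d − 1 ways. -/
/-!
Let `χ` be the quadratic character of `F`. For `x ≠ 0`, `1 + χ x` is `2` on squares and `0` on
non-squares, so summing `(1 + χ x) (1 + χ (β - x))` over `x` counts the wanted representations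
`4` times, plus the two boundary terms `x = 0` and `x = β`, which contribute `2` each because `β`
is a square. Expanding the product instead, the linear terms vanish and the quadratic term is a
Jacobi sum `J(χ, χ) = -χ(-1)`, so `4 N + 4 = q - χ(-1)`, and `χ(-1) = 1` exactly when
`q ≡ 1 (mod 4)`.
-/

open Finset

theorem card_filter_add_eq_card_filter_sub {G : Type*} [AddCommGroup G] [Fintype G] [DecidableEq G]
    (P Q : G → Prop) [DecidablePred P] [DecidablePred Q] (β : G) :
    #{xy : G × G | P xy.1 ∧ Q xy.2 ∧ xy.1 + xy.2 = β} = #{x | P x ∧ Q (β - x)} := by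
  refine card_bij' (fun xy _ => xy.1) (fun x _ => (x, β - x)) ?_ ?_ ?_ ?_
  · rintro ⟨x, y⟩ h
    simp only [mem_filter, mem_univ, true_and] at h ⊢
    obtain ⟨hx, hy, rfl⟩ := h
    simpa using And.intro hx hy
  · intro x h
    simp only [mem_filter, mem_univ, true_and] at h ⊢
    exact ⟨h.1, h.2, add_sub_cancel x β⟩
  · rintro ⟨x, y⟩ h
    simp only [mem_filter, mem_univ, true_and] at h
    simp [← h.2.2]
  · intro x _
    rfl

namespace FiniteField

variable {F : Type*} [Field F] [Fintype F] [DecidableEq F]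

theorem sum_quadraticChar_mul_quadraticChar_sub (hF : ringChar F ≠ 2) {β : F} (hβ : β ≠ 0) :
    ∑ x, quadraticChar F x * quadraticChar F (β - x) = -quadraticChar F (-1) := by
  have hJ : jacobiSum (quadraticChar F) (quadraticChar F) = -quadraticChar F (-1) := by
    simpa only [(quadraticChar_isQuadratic F).inv] using
      jacobiSum_nontrivial_inv (quadraticChar_ne_one hF)
  rw [← Equiv.sum_comp (Equiv.mulLeft₀ β hβ), ← hJ, jacobiSum]
  -- `χ (β t) χ (β - β t) = χ β ^ 2 · χ t χ (1 - t)` and `χ β ^ 2 = 1`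
  refine sum_congr rfl fun t _ => ?_
  have hsq := quadraticChar_sq_one hβ
  rw [Equiv.mulLeft₀_apply, ← mul_one_sub, map_mul, map_mul]
  linear_combination (quadraticChar F t * quadraticChar F (1 - t)) * hsq

theorem one_add_quadraticChar_mul_one_add_quadraticChar {x y : F} (hx : x ≠ 0) (hy : y ≠ 0) :
    (1 + quadraticChar F x) * (1 + quadraticChar F y) =
      if IsSquare x ∧ IsSquare y then 4 else 0 := by
  by_cases hxs : IsSquare x
  · by_cases hys : IsSquare y
    · rw [if_pos ⟨hxs, hys⟩, (quadraticChar_one_iff_isSquare hx).mpr hxs,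
        (quadraticChar_one_iff_isSquare hy).mpr hys]
      norm_num
    · rw [if_neg fun h => hys h.2, quadraticChar_neg_one_iff_not_isSquare.mpr hys]
      ring
  · rw [if_neg fun h => hxs h.1, quadraticChar_neg_one_iff_not_isSquare.mpr hxs]
    ring

theorem sum_one_add_quadraticChar_mul_one_add_quadraticChar_sub (hF : ringChar F ≠ 2) {β : F}
    (hβ : β ≠ 0) :
    ∑ x, (1 + quadraticChar F x) * (1 + quadraticChar F (β - x)) =
      Fintype.card F - quadraticChar F (-1) := by
  have hshift : ∑ x : F, quadraticChar F (β - x) = 0 := by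
    exact (Fintype.sum_equiv (Equiv.subLeft β) _ _ fun _ => rfl).trans (quadraticChar_sum_zero hF)
  simp only [add_mul, one_mul, mul_add, mul_one, sum_add_distrib, quadraticChar_sum_zero hF,
    hshift, sum_quadraticChar_mul_quadraticChar_sub hF hβ, sum_const, card_univ,
    nsmul_eq_mul, mul_one]
  ring

theorem sum_one_add_quadraticChar_mul_one_add_quadraticChar_sub_of_isSquare {β : F}
    (hβ : β ≠ 0) (hβs : IsSquare β) :
    ∑ x, (1 + quadraticChar F x) * (1 + quadraticChar F (β - x)) =
      4 * #{x | x ≠ 0 ∧ IsSquare x ∧ β - x ≠ 0 ∧ IsSquare (β - x)} + 4 := by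
  have hχβ : 1 + quadraticChar F β = 2 := by
    rw [(quadraticChar_one_iff_isSquare hβ).mpr hβs]; norm_num
  have hterm : ∀ x : F, (1 + quadraticChar F x) * (1 + quadraticChar F (β - x)) =
      (if x ≠ 0 ∧ IsSquare x ∧ β - x ≠ 0 ∧ IsSquare (β - x) then 4 else 0) +
        ((if x = 0 then 2 else 0) + if x = β then 2 else 0) := by
    intro x
    by_cases h0 : x = 0
    · subst h0
      simp only [sub_zero, quadraticChar_zero, hχβ, Ne.symm hβ]
      norm_num
    by_cases hb : x = β
    · subst hb
      simp only [sub_self, quadraticChar_zero, hχβ, h0]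
      norm_num
    have hbx : β - x ≠ 0 := sub_ne_zero.mpr (Ne.symm hb)
    simp only [one_add_quadraticChar_mul_one_add_quadraticChar h0 hbx, h0, hb, hbx, ne_eq,
      not_false_eq_true, true_and, if_false, add_zero]
  simp only [hterm, sum_add_distrib, sum_ite_eq', mem_univ, if_true,
    ← sum_filter, sum_const, nsmul_eq_mul]
  ring

theorem four_mul_card_sum_two_nonzero_squares_add_four (hF : ringChar F ≠ 2) {β : F}
    (hβ : β ≠ 0) (hβs : IsSquare β) :
    4 * (#{x | x ≠ 0 ∧ IsSquare x ∧ β - x ≠ 0 ∧ IsSquare (β - x)} : ℤ) + 4 =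
      Fintype.card F - ZMod.χ₄ (Fintype.card F) := by
  rw [← sum_one_add_quadraticChar_mul_one_add_quadraticChar_sub_of_isSquare hβ hβs,
    sum_one_add_quadraticChar_mul_one_add_quadraticChar_sub hF hβ, quadraticChar_neg_one hF]

end FiniteField

open scoped Classical

theorem stmt_8_general (p m : ℕ) (hp : p.Prime) (hodd : p ≠ 2)
    (F : Type) [Field F] [Fintype F] (hcard : Fintype.card F = p ^ m)
    (d : ℕ) (hd : d = if p ^ m % 4 = 1 then (p ^ m - 1) / 4 else (p ^ m + 1) / 4)
    (β : F) (hβ : β ≠ 0) (hβs : IsSquare β) :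
    (Finset.univ.filter (fun xy : F × F =>
        xy.1 ≠ 0 ∧ IsSquare xy.1 ∧ xy.2 ≠ 0 ∧ IsSquare xy.2 ∧ xy.1 + xy.2 = β)).card
      = d - 1 := by
  have hq : p ^ m % 2 = 1 := Nat.odd_iff.mp (hp.odd_of_ne_two hodd).pow
  have hF : ringChar F ≠ 2 := fun h => by
    have := FiniteField.even_card_of_char_two h
    omega
  have hpairs := card_filter_add_eq_card_filter_sub (fun x : F => x ≠ 0 ∧ IsSquare x)
    (fun x => x ≠ 0 ∧ IsSquare x) β
  simp only [and_assoc] at hpairs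
  have key := FiniteField.four_mul_card_sum_two_nonzero_squares_add_four hF hβ hβs
  rw [hcard] at key
  rw [hpairs]
  rcases (by omega : p ^ m % 4 = 1 ∨ p ^ m % 4 = 3) with h4 | h4
  · rw [ZMod.χ₄_nat_one_mod_four h4] at key
    rw [hd, if_pos h4]
    omega
  · rw [ZMod.χ₄_nat_three_mod_four h4] at key
    rw [hd, if_neg (by omega)]
    omega

theorem stmt_8 (p m : ℕ) (hp : p.Prime) (hodd : p ≠ 2) (hm : m ≠ 0)
    (F : Type) [Field F] [Fintype F] (hcard : Fintype.card F = p ^ m)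
    (d : ℕ) (hd : d = if p ^ m % 4 = 1 then (p ^ m - 1) / 4 else (p ^ m + 1) / 4)
    (β : F) (hβ : β ≠ 0) (hβs : IsSquare β) :
    (Finset.univ.filter (fun xy : F × F =>
        xy.1 ≠ 0 ∧ IsSquare xy.1 ∧ xy.2 ≠ 0 ∧ IsSquare xy.2 ∧ xy.1 + xy.2 = β)).card
      = d - 1 :=
  stmt_8_general p m hp hodd F hcard d hd β hβ hβs
end

section
/- Let p be an odd prime, q = p^m, and set d = (q−1)/4 if q ≡ 1 (mod 4) and d = (q+1)/4 if q ≡ 3 (mod 4). Then every non-square in F_q^* can be written as an ordered sum of two nonzero squares in exactly d ways. -/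
/-!
With `χ` the quadratic character, `(1 + χ a) (1 + χ (β - a))` is `4` when `a` and `β - a` are
nonzero squares and `0` otherwise: the terms `a = 0` and `a = β` vanish because `χ β = -1`.
Summing over `a`, the linear terms cancel and the cross term is the Jacobi sum
`J(χ, χ) = -χ(-1)` after the substitution `a = β x`, so four times the count is
`q - χ(-1) = q - χ₄(q)`.
-/

open scoped Classical

open Finset

theorem Finset.card_filter_add_eq {G : Type*} [AddCommGroup G] [Fintype G] (P Q : G → Prop)
    [DecidablePred P] [DecidablePred Q] (β : G) :
    #{xy : G × G | P xy.1 ∧ Q xy.2 ∧ xy.1 + xy.2 = β} = #{a | P a ∧ Q (β - a)} := by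
  refine card_nbij' Prod.fst (fun a => (a, β - a)) ?_ ?_ ?_ ?_
  · rintro ⟨x, y⟩ h
    simp only [coe_filter, mem_univ, true_and, Set.mem_ofPred_eq] at h ⊢
    obtain ⟨hx, hy, rfl⟩ := h
    simpa using And.intro hx hy
  · intro a h
    simp only [coe_filter, mem_univ, true_and, Set.mem_ofPred_eq] at h ⊢
    exact ⟨h.1, h.2, add_sub_cancel a β⟩
  · rintro ⟨x, y⟩ h
    simp only [coe_filter, mem_univ, true_and, Set.mem_ofPred_eq] at h
    simp [← h.2.2]
  · intro a _
    rfl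

section QuadraticChar

variable {F : Type*} [Field F] [Fintype F] [DecidableEq F]

theorem sum_quadraticChar_mul_quadraticChar_sub (hF : ringChar F ≠ 2) {β : F} (hβ : β ≠ 0) :
    ∑ a : F, quadraticChar F a * quadraticChar F (β - a) = -quadraticChar F (-1) := by
  have hββ : quadraticChar F β * quadraticChar F β = 1 := by
    rw [← sq, quadraticChar_sq_one hβ]
  calc ∑ a : F, quadraticChar F a * quadraticChar F (β - a)
      = ∑ x : F, quadraticChar F (β * x) * quadraticChar F (β * (1 - x)) := by
        rw [← Equiv.sum_comp (Equiv.mulLeft₀ β hβ)]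
        simp [mul_sub]
    _ = jacobiSum (quadraticChar F) (quadraticChar F)⁻¹ := by
        simp only [map_mul, (quadraticChar_isQuadratic F).inv, jacobiSum]
        refine sum_congr rfl fun x _ => ?_
        linear_combination (quadraticChar F x * quadraticChar F (1 - x)) * hββ
    _ = -quadraticChar F (-1) := jacobiSum_nontrivial_inv (quadraticChar_ne_one hF)

theorem one_add_quadraticChar_mul_one_add_quadraticChar_sub {β : F} (hβ : ¬IsSquare β) (a : F) :
    (1 + quadraticChar F a) * (1 + quadraticChar F (β - a)) =
      if (a ≠ 0 ∧ IsSquare a) ∧ (β - a ≠ 0 ∧ IsSquare (β - a)) then 4 else 0 := by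
  have hχβ : quadraticChar F β = -1 := quadraticChar_neg_one_iff_not_isSquare.mpr hβ
  rcases eq_or_ne a 0 with rfl | ha
  · simp [hχβ]
  rcases eq_or_ne a β with rfl | haβ
  · simp [hχβ]
  have hβa : β - a ≠ 0 := sub_ne_zero.mpr haβ.symm
  simp only [quadraticChar_apply, quadraticCharFun, ha, hβa]
  split_ifs <;> simp_all

theorem four_mul_card_filter_isSquare_sub (hF : ringChar F ≠ 2) {β : F} (hβ : ¬IsSquare β) :
    4 * (#{a : F | (a ≠ 0 ∧ IsSquare a) ∧ (β - a ≠ 0 ∧ IsSquare (β - a))} : ℤ) =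
      Fintype.card F - ZMod.χ₄ (Fintype.card F) := by
  have hβ0 : β ≠ 0 := by rintro rfl; exact hβ IsSquare.zero
  have hshift : ∑ a : F, quadraticChar F (β - a) = 0 :=
    ((Equiv.subLeft β).sum_comp (quadraticChar F)).trans (quadraticChar_sum_zero hF)
  rw [natCast_card_filter, mul_sum, ← quadraticChar_neg_one hF]
  simp only [mul_ite, mul_one, mul_zero,
    ← one_add_quadraticChar_mul_one_add_quadraticChar_sub hβ]
  simp only [add_mul, one_mul, mul_add, mul_one, sum_add_distrib, sum_const, card_univ,
    quadraticChar_sum_zero hF, hshift, sum_quadraticChar_mul_quadraticChar_sub hF hβ0]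
  simp [sub_eq_add_neg]

end QuadraticChar

theorem eq_ite_of_four_mul_eq_sub_χ₄ {q n : ℕ} (hq : q % 2 = 1)
    (h : 4 * (n : ℤ) = q - ZMod.χ₄ q) : n = if q % 4 = 1 then (q - 1) / 4 else (q + 1) / 4 := by
  rw [ZMod.χ₄_nat_eq_if_mod_four, if_neg (by omega)] at h
  split_ifs at h ⊢ <;> omega

theorem stmt_9_general (p m : ℕ) (hp : p.Prime) (hodd : p ≠ 2)
    (F : Type) [Field F] [Fintype F] (hcard : Fintype.card F = p ^ m)
    (d : ℕ) (hd : d = if p ^ m % 4 = 1 then (p ^ m - 1) / 4 else (p ^ m + 1) / 4)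
    (β : F) (hβs : ¬ IsSquare β) :
    (Finset.univ.filter (fun xy : F × F =>
        xy.1 ≠ 0 ∧ IsSquare xy.1 ∧ xy.2 ≠ 0 ∧ IsSquare xy.2 ∧ xy.1 + xy.2 = β)).card
      = d := by
  have hq : p ^ m % 2 = 1 := Nat.odd_iff.mp (hp.odd_of_ne_two hodd).pow
  have hF : ringChar F ≠ 2 := by
    rw [Ne, FiniteField.even_card_iff_char_two, hcard, hq]
    decide
  have hcount := four_mul_card_filter_isSquare_sub hF hβs
  rw [hcard] at hcount
  rw [hd, ← eq_ite_of_four_mul_eq_sub_χ₄ hq hcount]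
  simpa only [and_assoc] using
    card_filter_add_eq (fun x : F => x ≠ 0 ∧ IsSquare x) (fun x : F => x ≠ 0 ∧ IsSquare x) β

theorem stmt_9 (p m : ℕ) (hp : p.Prime) (hodd : p ≠ 2) (hm : m ≠ 0)
    (F : Type) [Field F] [Fintype F] (hcard : Fintype.card F = p ^ m)
    (d : ℕ) (hd : d = if p ^ m % 4 = 1 then (p ^ m - 1) / 4 else (p ^ m + 1) / 4)
    (β : F) (hβ : β ≠ 0) (hβs : ¬ IsSquare β) :
    (Finset.univ.filter (fun xy : F × F =>
        xy.1 ≠ 0 ∧ IsSquare xy.1 ∧ xy.2 ≠ 0 ∧ IsSquare xy.2 ∧ xy.1 + xy.2 = β)).card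
      = d :=
  stmt_9_general p m hp hodd F hcard d hd β hβs
end

section
/- Let p be an odd prime, q = p^m, and set d = (q−1)/4 if q ≡ 1 (mod 4) and d = (q+1)/4 if q ≡ 3 (mod 4). Then every nonzero element of F_q can be written as an ordered sum of a nonzero square and a non-square (in either order) in exactly q − 1 − 2d ways. -/
/-! The quadratic character `χ` of `F` turns the count into a character sum: a pair
`(x, β - x)` of nonzero elements is mixed exactly when `χ x * χ (β - x) = -1`, and the
`q - 2` such products are all `±1`, so twice the number of mixed pairs is
`q - 2 - ∑ₓ χ x χ (β - x)`. Scaling `x ↦ β x` identifies this sum with the Jacobi sum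
`J(χ, χ) = -χ(-1)`, and `χ(-1) = 1` or `-1` according as `q ≡ 1` or `3 (mod 4)`. -/

open scoped Classical

open Finset

lemma two_mul_card_filter_eq_neg_one {α : Type*} [Fintype α] (f : α → ℤ)
    (hf : ∀ a, f a = 0 ∨ f a = 1 ∨ f a = -1) :
    2 * (#{a | f a = -1} : ℤ) = #{a | f a ≠ 0} - ∑ a, f a := by
  simp only [card_filter, Nat.cast_sum, Nat.cast_ite, Nat.cast_one, Nat.cast_zero, mul_sum,
    ← sum_sub_distrib]
  refine sum_congr rfl fun a _ => ?_
  rcases hf a with h | h | h <;> simp [h]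

section FiniteField

variable {F : Type*} [Field F] [Fintype F]

lemma MulChar.sum_mul_apply_sub {R : Type*} [CommRing R] (χ ψ : MulChar F R) {β : F}
    (hβ : β ≠ 0) : ∑ x, χ x * ψ (β - x) = (χ * ψ) β * jacobiSum χ ψ := by
  rw [jacobiSum, mul_sum, ← Equiv.sum_comp (Equiv.mulLeft₀ β hβ)]
  refine sum_congr rfl fun x _ => ?_
  change χ (β * x) * ψ (β - β * x) = _
  rw [show β - β * x = β * (1 - x) by ring]
  simp only [MulChar.coeToFun_mul, Pi.mul_apply, map_mul]
  ring

lemma quadraticChar_sum_mul_apply_sub (hF : ringChar F ≠ 2) {β : F} (hβ : β ≠ 0) :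
    ∑ x, quadraticChar F x * quadraticChar F (β - x) = -quadraticChar F (-1) := by
  have hinv := (quadraticChar_isQuadratic F).inv
  have hJ := jacobiSum_nontrivial_inv (quadraticChar_ne_one hF)
  rw [hinv] at hJ
  rw [MulChar.sum_mul_apply_sub _ _ hβ, MulChar.coeToFun_mul, Pi.mul_apply,
    ← sq, quadraticChar_sq_one hβ, one_mul, hJ]

lemma quadraticChar_mul_eq_neg_one_iff {a b : F} :
    quadraticChar F a * quadraticChar F b = -1 ↔
      a ≠ 0 ∧ b ≠ 0 ∧ ((IsSquare a ∧ ¬IsSquare b) ∨ (¬IsSquare a ∧ IsSquare b)) := by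
  by_cases ha : a = 0
  · simp [ha]
  by_cases hb : b = 0
  · simp [hb]
  rcases quadraticChar_dichotomy ha with h1 | h1 <;>
    rcases quadraticChar_dichotomy hb with h2 | h2 <;>
    simp [ha, hb, h1, h2, ← quadraticChar_one_iff_isSquare ha,
      ← quadraticChar_one_iff_isSquare hb]

lemma card_quadraticChar_mul_apply_sub_ne_zero {β : F} (hβ : β ≠ 0) :
    #{x | quadraticChar F x * quadraticChar F (β - x) ≠ 0} = Fintype.card F - 2 := by
  have : ({x | quadraticChar F x * quadraticChar F (β - x) ≠ 0} : Finset F) = {0, β}ᶜ := by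
    ext x
    simp only [mem_filter, mem_univ, true_and, ne_eq, mul_eq_zero, quadraticChar_eq_zero_iff,
      not_or, sub_eq_zero, mem_compl, mem_insert, mem_singleton, eq_comm (a := β)]
  rw [this, card_compl, card_pair hβ.symm]

lemma card_mixed_pairs_eq (β : F) :
    #{xy : F × F | xy.1 ≠ 0 ∧ xy.2 ≠ 0 ∧ xy.1 + xy.2 = β ∧
        ((IsSquare xy.1 ∧ ¬IsSquare xy.2) ∨ (¬IsSquare xy.1 ∧ IsSquare xy.2))} =
      #{x | quadraticChar F x * quadraticChar F (β - x) = -1} := by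
  refine card_nbij' Prod.fst (fun x => (x, β - x)) ?_ ?_ ?_ ?_
  · rintro ⟨x, y⟩ h
    simp only [coe_filter, mem_univ, true_and, Set.mem_ofPred_eq] at h ⊢
    obtain ⟨hx, hy, rfl, hmix⟩ := h
    rw [add_sub_cancel_left]
    exact quadraticChar_mul_eq_neg_one_iff.mpr ⟨hx, hy, hmix⟩
  · intro x h
    simp only [coe_filter, mem_univ, true_and, Set.mem_ofPred_eq] at h ⊢
    obtain ⟨hx, hy, hmix⟩ := quadraticChar_mul_eq_neg_one_iff.mp h
    exact ⟨hx, hy, add_sub_cancel _ _, hmix⟩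
  · rintro ⟨x, y⟩ h
    simp only [coe_filter, mem_univ, true_and, Set.mem_ofPred_eq] at h
    simp [← h.2.2.1]
  · intro x _
    rfl

theorem two_mul_card_mixed_pairs (hF : ringChar F ≠ 2) {β : F} (hβ : β ≠ 0) :
    2 * (#{xy : F × F | xy.1 ≠ 0 ∧ xy.2 ≠ 0 ∧ xy.1 + xy.2 = β ∧
        ((IsSquare xy.1 ∧ ¬IsSquare xy.2) ∨ (¬IsSquare xy.1 ∧ IsSquare xy.2))} : ℤ) =
      (Fintype.card F - 2 : ℕ) + ZMod.χ₄ (Fintype.card F) := by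
  rw [card_mixed_pairs_eq, two_mul_card_filter_eq_neg_one, ← quadraticChar_neg_one hF,
    card_quadraticChar_mul_apply_sub_ne_zero hβ, quadraticChar_sum_mul_apply_sub hF hβ,
    sub_neg_eq_add]
  intro x
  rw [← map_mul]
  exact quadraticChar_isQuadratic F _

end FiniteField

theorem stmt_11_general (p m : ℕ) (hp : p.Prime) (hodd : p ≠ 2)
    (F : Type) [Field F] [Fintype F] (hcard : Fintype.card F = p ^ m)
    (d : ℕ) (hd : d = if p ^ m % 4 = 1 then (p ^ m - 1) / 4 else (p ^ m + 1) / 4)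
    (β : F) (hβ : β ≠ 0) :
    (Finset.univ.filter (fun xy : F × F =>
        xy.1 ≠ 0 ∧ xy.2 ≠ 0 ∧ xy.1 + xy.2 = β ∧
        ((IsSquare xy.1 ∧ ¬ IsSquare xy.2) ∨ (¬ IsSquare xy.1 ∧ IsSquare xy.2)))).card
      = p ^ m - 1 - 2 * d := by
  have hq_odd : Fintype.card F % 2 = 1 :=
    hcard ▸ Nat.odd_iff.mp (hp.odd_of_ne_two hodd).pow
  have hF : ringChar F ≠ 2 := fun h => by
    simp [FiniteField.even_card_iff_char_two.mp h] at hq_odd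
  have hcount := two_mul_card_mixed_pairs hF hβ
  have hq_gt_one := Fintype.one_lt_card (α := F)
  rw [← hcard] at hd ⊢
  rcases Nat.odd_mod_four_iff.mp hq_odd with h4 | h4
  · rw [ZMod.χ₄_nat_one_mod_four h4] at hcount
    rw [if_pos h4] at hd
    omega
  · rw [ZMod.χ₄_nat_three_mod_four h4] at hcount
    rw [if_neg (by omega)] at hd
    omega

theorem stmt_11 (p m : ℕ) (hp : p.Prime) (hodd : p ≠ 2) (hm : m ≠ 0)
    (F : Type) [Field F] [Fintype F] (hcard : Fintype.card F = p ^ m)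
    (d : ℕ) (hd : d = if p ^ m % 4 = 1 then (p ^ m - 1) / 4 else (p ^ m + 1) / 4)
    (β : F) (hβ : β ≠ 0) :
    (Finset.univ.filter (fun xy : F × F =>
        xy.1 ≠ 0 ∧ xy.2 ≠ 0 ∧ xy.1 + xy.2 = β ∧
        ((IsSquare xy.1 ∧ ¬ IsSquare xy.2) ∨ (¬ IsSquare xy.1 ∧ IsSquare xy.2)))).card
      = p ^ m - 1 - 2 * d :=
  stmt_11_general p m hp hodd F hcard d hd β hβ
end

section
/- Let p be an odd prime and R_k = F_{p^m}[x_1,…,x_m] / ⟨∏_{j=1}^m (x_j − 1)^k⟩ for k ≥ 1. Then every invertible element of R_k has at most two square roots in R_k. -/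
/-!
A square root `v` of `1` in `A ⧸ (g)` lifts to `V` with `g ∣ (V - 1) * (V + 1)`. For
`g = (∏ j, (X j - 1)) ^ k`, evaluation at the point `(1, …, 1)` kills every prime factor of `g`
(each `X j - 1` is irreducible), but it cannot kill both `V - 1` and `V + 1`, whose difference is
the unit `2`. So one of them has no prime factor in common with `g`, `g` divides the other, and
`v = ±1`. Once `±1` are the only square roots of `1`, the square roots of a unit `u` are `±a` for
any one of them `a`, so among three of them two coincide.
-/

open MvPolynomial

theorem dvd_of_dvd_mul_left_of_map_ne_zero {A B : Type*} [CommRing A] [IsDomain A]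
    [UniqueFactorizationMonoid A] [NonAssocSemiring B] (φ : A →+* B) {g a c : A} (hg : g ≠ 0)
    (hφg : ∀ d, Prime d → d ∣ g → φ d = 0) (hc : φ c ≠ 0) (h : g ∣ a * c) : g ∣ a :=
  UniqueFactorizationMonoid.dvd_of_dvd_mul_left_of_no_prime_factors hg
    (fun d hdg ⟨e, hde⟩ hd => hc (by rw [hde, map_mul, hφg d hd hdg, zero_mul])) h

theorem Ideal.Quotient.eq_one_or_eq_neg_one_of_sq_eq_one {A B : Type*} [CommRing A] [IsDomain A]
    [UniqueFactorizationMonoid A] [CommRing B] (φ : A →+* B) (h2 : (2 : B) ≠ 0)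
    {g : A} (hg : g ≠ 0) (hφg : ∀ d, Prime d → d ∣ g → φ d = 0)
    {v : A ⧸ Ideal.span {g}} (hv : v ^ 2 = 1) : v = 1 ∨ v = -1 := by
  obtain ⟨V, rfl⟩ := Ideal.Quotient.mk_surjective v
  have hdvd : g ∣ (V - 1) * (V + 1) := by
    rw [← Ideal.mem_span_singleton, ← Ideal.Quotient.eq_zero_iff_mem]
    simp only [map_mul, map_sub, map_add, map_one]
    linear_combination hv
  by_cases hφ : φ (V + 1) = 0
  · right
    have hφ' : φ (V - 1) ≠ 0 := fun h => h2 <| by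
      rw [map_add, map_one] at hφ
      rw [map_sub, map_one] at h
      linear_combination hφ - h
    rw [← sub_eq_zero, sub_neg_eq_add, ← map_one (Ideal.Quotient.mk _), ← map_add,
      Ideal.Quotient.eq_zero_iff_mem, Ideal.mem_span_singleton]
    exact dvd_of_dvd_mul_left_of_map_ne_zero φ hg hφg hφ' (mul_comm (V - 1) _ ▸ hdvd)
  · left
    rw [← sub_eq_zero, ← map_one (Ideal.Quotient.mk _), ← map_sub,
      Ideal.Quotient.eq_zero_iff_mem, Ideal.mem_span_singleton]
    exact dvd_of_dvd_mul_left_of_map_ne_zero φ hg hφg hφ hdvd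

theorem eq_or_eq_neg_of_sq_eq_sq_of_isUnit {R : Type*} [CommRing R]
    (h : ∀ v : R, v ^ 2 = 1 → v = 1 ∨ v = -1) {a b : R} (hb : IsUnit b) (hab : a ^ 2 = b ^ 2) :
    a = b ∨ a = -b := by
  obtain ⟨b, rfl⟩ := hb
  have : (a * ↑b⁻¹) ^ 2 = 1 := by rw [mul_pow, hab, ← mul_pow, Units.mul_inv, one_pow]
  rcases h _ this with h | h
  · exact Or.inl (Units.mul_inv_eq_one.mp h)
  · exact Or.inr (by rw [Units.mul_inv_eq_iff_eq_mul] at h; rw [h, neg_one_mul])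

theorem eq_or_eq_or_eq_of_sq_eq_of_isUnit {R : Type*} [CommRing R]
    (h : ∀ v : R, v ^ 2 = 1 → v = 1 ∨ v = -1) {u a b c : R} (hu : IsUnit u)
    (ha : a ^ 2 = u) (hb : b ^ 2 = u) (hc : c ^ 2 = u) : a = b ∨ a = c ∨ b = c := by
  have unit_of_sq {x : R} (hx : x ^ 2 = u) : IsUnit x := (isUnit_pow_iff two_ne_zero).mp (hx ▸ hu)
  rcases eq_or_eq_neg_of_sq_eq_sq_of_isUnit h (unit_of_sq hb) (ha.trans hb.symm) with hab | hab
  · exact Or.inl hab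
  rcases eq_or_eq_neg_of_sq_eq_sq_of_isUnit h (unit_of_sq hc) (hb.trans hc.symm) with hbc | hbc
  · exact Or.inr (Or.inr hbc)
  · exact Or.inr (Or.inl (by rw [hab, hbc, neg_neg]))

namespace MvPolynomial

variable {σ K : Type*} [Field K]

theorem totalDegree_X_sub_C (i : σ) (a : K) : (X i - C a : MvPolynomial σ K).totalDegree = 1 := by
  rw [sub_eq_add_neg, ← C_neg, totalDegree_add_eq_left_of_totalDegree_lt] <;>
    simp [totalDegree_X]

theorem irreducible_X_sub_C (i : σ) (a : K) : Irreducible (X i - C a : MvPolynomial σ K) := by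
  classical
  refine irreducible_of_totalDegree_eq_one (totalDegree_X_sub_C i a) fun x hx => ?_
  have := hx (Finsupp.single i 1)
  rw [coeff_sub, coeff_X, coeff_C, if_neg (Finsupp.single_ne_zero.mpr one_ne_zero).symm,
    sub_zero, if_pos rfl] at this
  exact isUnit_of_dvd_one this

theorem eval_eq_zero_of_prime_dvd_prod_X_sub_C_pow {s : Finset σ} {x : σ → K} {k : ℕ}
    {d : MvPolynomial σ K} (hd : Prime d) (hdvd : d ∣ (∏ j ∈ s, (X j - C (x j))) ^ k) :
    eval x d = 0 := by
  obtain ⟨j, -, e, he⟩ := (hd.dvd_finsetProd_iff _).mp (hd.dvd_of_dvd_pow hdvd)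
  have he_unit : IsUnit e :=
    ((irreducible_X_sub_C j (x j)).isUnit_or_isUnit he).resolve_left hd.not_isUnit
  have := congrArg (eval x) he
  rw [map_sub, eval_X, eval_C, sub_self, map_mul] at this
  exact (mul_eq_zero.mp this.symm).resolve_right (he_unit.map (eval x)).ne_zero

end MvPolynomial

theorem stmt_13_general (p m k : ℕ) [Fact (Nat.Prime p)] (hodd : p ≠ 2)
    (u a b c : MvPolynomial (Fin m) (GaloisField p m) ⧸
      Ideal.span {(∏ j : Fin m, (MvPolynomial.X j - 1 : MvPolynomial (Fin m) (GaloisField p m))) ^ k})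
    (hu : IsUnit u) (ha : a ^ 2 = u) (hb : b ^ 2 = u) (hc : c ^ 2 = u) :
    a = b ∨ a = c ∨ b = c := by
  have h2 : (2 : GaloisField p m) ≠ 0 :=
    Ring.two_ne_zero (by rwa [ringChar.eq (GaloisField p m) p])
  have X_sub_one (j : Fin m) : (X j - 1 : MvPolynomial (Fin m) (GaloisField p m)) =
      X j - C ((1 : Fin m → GaloisField p m) j) := by
    rw [Pi.one_apply, map_one]
  refine eq_or_eq_or_eq_of_sq_eq_of_isUnit (fun v hv =>
    Ideal.Quotient.eq_one_or_eq_neg_one_of_sq_eq_one (eval 1) h2 ?_ (fun d hd hdvd => ?_) hv)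
    hu ha hb hc
  · simp_rw [X_sub_one]
    exact pow_ne_zero k (Finset.prod_ne_zero_iff.mpr fun j _ => (irreducible_X_sub_C j _).ne_zero)
  · simp_rw [X_sub_one] at hdvd
    exact eval_eq_zero_of_prime_dvd_prod_X_sub_C_pow hd hdvd

theorem stmt_13 (p m k : ℕ) [Fact (Nat.Prime p)] (hodd : p ≠ 2) (hm : m ≠ 0) (hk : 1 ≤ k)
    (u a b c : MvPolynomial (Fin m) (GaloisField p m) ⧸
      Ideal.span {(∏ j : Fin m, (MvPolynomial.X j - 1 : MvPolynomial (Fin m) (GaloisField p m))) ^ k})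
    (hu : IsUnit u) (ha : a ^ 2 = u) (hb : b ^ 2 = u) (hc : c ^ 2 = u) :
    a = b ∨ a = c ∨ b = c :=
  stmt_13_general p m k hodd u a b c hu ha hb hc
end
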